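/- Let 1 ≤ s ≤ m and k ≥ 1, and let P₂ ∈ H^{s-1}_{k-1}. Then d*(x P₂) = (k+m-s)P₂. Similarly, for 0 ≤ s ≤ m-1 and P₃ ∈ H^{s+1}_{k-1}, d(x* P₃) = (k+s)P₃. -/

import Mathlib

open MvPolynomial Finset

noncomputable section

/-- Polynomial differential forms on ℝ^m: a coefficient polynomial for each
increasing multi-index `I ⊆ {1,…,m}` (representing `dx_I`). -/
abbrev PForm (m : ℕ) := Finset (Fin m) → MvPolynomial (Fin m) ℝ

/-- The sign `(-1)^{#{i ∈ I : i < j}}`. -/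
def sgn (m : ℕ) (j : Fin m) (I : Finset (Fin m)) : ℝ :=
  (-1 : ℝ) ^ (I.filter (fun i => i < j)).card

/-- Exterior multiplication `dx_j ∧ ·`. -/
def wedgeOp (m : ℕ) (j : Fin m) : PForm m →ₗ[ℝ] PForm m where
  toFun P I := if j ∈ I then sgn m j I • P (I.erase j) else 0
  map_add' P Q := by
    funext I; by_cases h : j ∈ I <;> simp [h, smul_add]
  map_smul' c P := by
    funext I; by_cases h : j ∈ I <;> simp [h, smul_smul, mul_comm]

/-- Contraction (interior product) `dx_j ⌟ ·`. -/
def contrOp (m : ℕ) (j : Fin m) : PForm m →ₗ[ℝ] PForm m where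
  toFun P I := if j ∈ I then 0 else sgn m j I • P (insert j I)
  map_add' P Q := by
    funext I; by_cases h : j ∈ I <;> simp [h, smul_add]
  map_smul' c P := by
    funext I; by_cases h : j ∈ I <;> simp [h, smul_smul, mul_comm]

/-- Multiplication of the coefficients by the variable `x_j`. -/
def mulXOp (m : ℕ) (j : Fin m) : PForm m →ₗ[ℝ] PForm m where
  toFun P I := X j * P I
  map_add' P Q := by funext I; simp [mul_add]
  map_smul' c P := by funext I; simp [mul_smul_comm]

/-- Partial derivative `∂_{x_j}` of the coefficients. -/
def pderivOp (m : ℕ) (j : Fin m) : PForm m →ₗ[ℝ] PForm m where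
  toFun P I := pderiv j (P I)
  map_add' P Q := by funext I; simp
  map_smul' c P := by funext I; simp

/-- `x = -∑_j x_j dx_j ∧`. -/
def xOp (m : ℕ) : PForm m →ₗ[ℝ] PForm m := - ∑ j, mulXOp m j ∘ₗ wedgeOp m j

/-- `x* = ∑_j x_j dx_j ⌟`. -/
def xStarOp (m : ℕ) : PForm m →ₗ[ℝ] PForm m := ∑ j, mulXOp m j ∘ₗ contrOp m j

/-- The de Rham differential `d = ∑_j ∂_{x_j} dx_j ∧`. -/
def dOp (m : ℕ) : PForm m →ₗ[ℝ] PForm m := ∑ j, wedgeOp m j ∘ₗ pderivOp m j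

/-- Its formal adjoint `d* = -∑_j ∂_{x_j} dx_j ⌟`. -/
def dStarOp (m : ℕ) : PForm m →ₗ[ℝ] PForm m := - ∑ j, contrOp m j ∘ₗ pderivOp m j

/-- The Euler operator `E = ∑_j x_j ∂_{x_j}`. -/
def eulerOp (m : ℕ) : PForm m →ₗ[ℝ] PForm m := ∑ j, mulXOp m j ∘ₗ pderivOp m j

/-- The skew Euler operator `Ê = ∑_j (dx_j∧)(dx_j⌟)`. -/
def skewEulerOp (m : ℕ) : PForm m →ₗ[ℝ] PForm m := ∑ j, wedgeOp m j ∘ₗ contrOp m j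

/-- The componentwise Laplacian `Δ = ∑_j ∂²_{x_j}`. -/
def lapOp (m : ℕ) : PForm m →ₗ[ℝ] PForm m := ∑ j, pderivOp m j ∘ₗ pderivOp m j

/-- Multiplication by `r² = x_1² + ⋯ + x_m²`. -/
def r2Op (m : ℕ) : PForm m →ₗ[ℝ] PForm m := ∑ j, mulXOp m j ∘ₗ mulXOp m j

/-- `P` is an `s`-form: only components `dx_I` with `|I| = s` occur. -/
def IsSForm (m s : ℕ) (P : PForm m) : Prop := ∀ I : Finset (Fin m), I.card ≠ s → P I = 0

/-- All coefficients of `P` are homogeneous polynomials of degree `k`. -/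
def IsHomForm (m k : ℕ) (P : PForm m) : Prop := ∀ I : Finset (Fin m), (P I).IsHomogeneous k

/-- `H^s_k`: homogeneous polynomial `s`-forms of degree `k` solving the
Hodge–de Rham system `dP = 0`, `d*P = 0`. -/
def Hset (m s k : ℕ) : Set (PForm m) :=
  {P | IsSForm m s P ∧ IsHomForm m k P ∧ dOp m P = 0 ∧ dStarOp m P = 0}

/-- `ℳ_k`: homogeneous degree-`k` polynomial forms with `(d + d*)P = 0`. -/
def Mk (m k : ℕ) : Set (PForm m) :=
  {P | IsHomForm m k P ∧ (dOp m + dStarOp m) P = 0}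

/-- `M_{s,k} = [(k-1+m-s)x* - (k-1+s)x] H^s_{k-1}`. -/
def Mset (m s k : ℕ) : Set (PForm m) :=
  (⇑(((k : ℝ) - 1 + m - s) • xStarOp m - ((k : ℝ) - 1 + s) • xOp m)) '' Hset m s (k - 1)

end

section Aux
variable {m : ℕ}

lemma sgn_insert_self (j : Fin m) (I : Finset (Fin m)) : sgn m j (insert j I) = sgn m j I := by
  unfold sgn
  congr 2
  rw [Finset.filter_insert, if_neg (lt_irrefl j)]

lemma sgn_erase_self (j : Fin m) (I : Finset (Fin m)) : sgn m j (I.erase j) = sgn m j I := by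
  unfold sgn
  congr 2
  rw [Finset.filter_erase]
  exact Finset.erase_eq_of_notMem (by simp)

lemma sgn_mul_self (j : Fin m) (I : Finset (Fin m)) : sgn m j I * sgn m j I = 1 := by
  unfold sgn
  rw [← pow_add]
  exact Even.neg_one_pow ⟨_, rfl⟩

lemma sgn_smul_sgn_smul (j : Fin m) (I I' : Finset (Fin m)) (h : sgn m j I = sgn m j I')
    (q : MvPolynomial (Fin m) ℝ) : sgn m j I • sgn m j I' • q = q := by
  rw [smul_smul, h, sgn_mul_self, one_smul]

lemma sgn_swap (i j : Fin m) (I : Finset (Fin m)) (hij : i ≠ j) (hi : i ∉ I) (hj : j ∈ I) :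
    sgn m i I * sgn m j (insert i I) = -(sgn m j I * sgn m i (I.erase j)) := by
  unfold sgn
  rcases lt_or_gt_of_ne hij with h | h
  · have h1 : (insert i I).filter (fun a => a < j) = insert i (I.filter (fun a => a < j)) := by
      rw [Finset.filter_insert, if_pos h]
    have h2 : (I.erase j).filter (fun a => a < i) = I.filter (fun a => a < i) := by
      rw [Finset.filter_erase]
      exact Finset.erase_eq_of_notMem (by simp [Finset.mem_filter, asymm h])
    rw [h1, h2, Finset.card_insert_of_notMem (by simp [Finset.mem_filter, hi]), pow_succ]
    ring
  · have h1 : (insert i I).filter (fun a => a < j) = I.filter (fun a => a < j) := by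
      rw [Finset.filter_insert, if_neg (asymm h)]
    have hjf : j ∈ I.filter (fun a => a < i) := Finset.mem_filter.mpr ⟨hj, h⟩
    have h2 : (I.filter (fun a => a < i)).card
        = ((I.erase j).filter (fun a => a < i)).card + 1 := by
      rw [Finset.filter_erase, Finset.card_erase_of_mem hjf]
      have := Finset.card_pos.mpr ⟨j, hjf⟩
      omega
    rw [h1, h2, pow_succ]
    ring

lemma sum_ite_nmem {M : Type*} [AddCommMonoid M] (I : Finset (Fin m)) (f : Fin m → M) :
    (∑ i, if i ∈ I then 0 else f i) = ∑ i ∈ Iᶜ, f i := by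
  rw [← Finset.sum_add_sum_compl I]
  rw [Finset.sum_congr rfl (fun i hi => if_pos hi), Finset.sum_const_zero, zero_add]
  exact Finset.sum_congr rfl fun i hi => if_neg (Finset.mem_compl.mp hi)

lemma sum_ite_mem' {M : Type*} [AddCommMonoid M] (I : Finset (Fin m)) (f : Fin m → M) :
    (∑ i, if i ∈ I then f i else 0) = ∑ i ∈ I, f i := by
  rw [Finset.sum_ite_mem, Finset.univ_inter]

lemma dStarOp_apply (P : PForm m) (I : Finset (Fin m)) :
    dStarOp m P I = -∑ i ∈ Iᶜ, sgn m i I • pderiv i (P (insert i I)) := by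
  have h : dStarOp m P I
      = -(((∑ j : Fin m, contrOp m j ∘ₗ pderivOp m j) P) I) := rfl
  rw [h, LinearMap.sum_apply, Finset.sum_apply]
  congr 1
  rw [← sum_ite_nmem I]
  exact Finset.sum_congr rfl fun i _ => rfl

lemma dOp_apply (P : PForm m) (I : Finset (Fin m)) :
    dOp m P I = ∑ i ∈ I, sgn m i I • pderiv i (P (I.erase i)) := by
  show ((∑ j : Fin m, wedgeOp m j ∘ₗ pderivOp m j) P) I = _
  rw [LinearMap.sum_apply, Finset.sum_apply, ← sum_ite_mem' I]
  exact Finset.sum_congr rfl fun i _ => rfl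

lemma xOp_apply (P : PForm m) (I : Finset (Fin m)) :
    xOp m P I = -∑ j ∈ I, sgn m j I • (X j * P (I.erase j)) := by
  have h : xOp m P I
      = -(((∑ j : Fin m, mulXOp m j ∘ₗ wedgeOp m j) P) I) := rfl
  rw [h, LinearMap.sum_apply, Finset.sum_apply]
  congr 1
  rw [← sum_ite_mem' I]
  refine Finset.sum_congr rfl fun j _ => ?_
  show X j * (if j ∈ I then sgn m j I • P (I.erase j) else 0) = _
  by_cases h : j ∈ I <;> simp [h, mul_smul_comm]

lemma xStarOp_apply (P : PForm m) (I : Finset (Fin m)) :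
    xStarOp m P I = ∑ j ∈ Iᶜ, sgn m j I • (X j * P (insert j I)) := by
  show ((∑ j : Fin m, mulXOp m j ∘ₗ contrOp m j) P) I = _
  rw [LinearMap.sum_apply, Finset.sum_apply, ← sum_ite_nmem I]
  refine Finset.sum_congr rfl fun j _ => ?_
  show X j * (if j ∈ I then 0 else sgn m j I • P (insert j I)) = _
  by_cases h : j ∈ I <;> simp [h, mul_smul_comm]

end Aux
lemma euler_identity {m n : ℕ} (p : MvPolynomial (Fin m) ℝ) (hp : p.IsHomogeneous n) :
    ∑ j, X j * pderiv j p = (n : ℝ) • p := by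
  have key : ∀ d ∈ p.support,
      ∑ j, X j * pderiv j (monomial d (coeff d p)) = (n : ℝ) • monomial d (coeff d p) := by
    intro d hd
    have hdeg : ∑ j, d j = n := by
      have h1 := hp (MvPolynomial.mem_support_iff.mp hd)
      rw [← h1]
      rw [show (Finsupp.weight 1) d = Finsupp.degree d from
        (DFunLike.congr_fun Finsupp.degree_eq_weight_one d).symm, Finsupp.degree]
      exact (Finset.sum_subset (Finset.subset_univ _)
        (fun x _ hx => Finsupp.notMem_support_iff.mp hx)).symm
    have step : ∀ j : Fin m, X j * pderiv j (monomial d (coeff d p))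
        = monomial d (coeff d p * (d j : ℝ)) := by
      intro j
      rw [pderiv_monomial]
      by_cases h : d j = 0
      · simp [h]
      · rw [X, monomial_mul, one_mul, add_tsub_cancel_of_le]
        exact Finsupp.single_le_iff.mpr (Nat.one_le_iff_ne_zero.mpr h)
    simp_rw [step]
    rw [← map_sum, ← Finset.mul_sum, smul_monomial]
    congr 1
    rw [← Nat.cast_sum, hdeg, smul_eq_mul]
    ring
  conv_lhs => rw [← p.support_sum_monomial_coeff]
  conv_rhs => rw [← p.support_sum_monomial_coeff]
  rw [Finset.smul_sum]
  simp_rw [map_sum, Finset.mul_sum]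
  rw [Finset.sum_comm]
  exact Finset.sum_congr rfl key

lemma key1 {m k : ℕ} (P : PForm m) (hh : IsHomForm m k P) (hds : dStarOp m P = 0)
    (I : Finset (Fin m)) :
    dStarOp m (xOp m P) I = ((m - I.card + k : ℕ) : ℝ) • P I := by
  rw [dStarOp_apply]
  have termA : ∀ i ∈ Iᶜ, -(sgn m i I • pderiv i (xOp m P (insert i I)))
      = (P I + X i * pderiv i (P I))
        - ∑ j ∈ I, (sgn m j I * sgn m i (I.erase j)) •
            (X j * pderiv i (P (insert i (I.erase j)))) := by
    intro i hi
    have hi' : i ∉ I := Finset.mem_compl.mp hi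
    rw [xOp_apply, Finset.sum_insert hi', Finset.erase_insert hi', sgn_insert_self]
    have hset : ∀ j ∈ I, sgn m j (insert i I) • (X j * P ((insert i I).erase j))
        = sgn m j (insert i I) • (X j * P (insert i (I.erase j))) := by
      intro j hj
      have hji : j ≠ i := fun h => hi' (h ▸ hj)
      rw [Finset.erase_insert_of_ne hji.symm]
    rw [Finset.sum_congr rfl hset]
    rw [map_neg, map_add, map_sum]
    rw [Derivation.map_smul, pderiv_mul, pderiv_X_self, one_mul]
    have hterm2 : ∀ j ∈ I, pderiv i (sgn m j (insert i I) • (X j * P (insert i (I.erase j))))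
        = sgn m j (insert i I) • (X j * pderiv i (P (insert i (I.erase j)))) := by
      intro j hj
      have hji : j ≠ i := fun h => hi' (h ▸ hj)
      rw [Derivation.map_smul, pderiv_mul, pderiv_X_of_ne hji, zero_mul, zero_add]
    rw [Finset.sum_congr rfl hterm2]
    rw [smul_neg, neg_neg, smul_add, smul_smul, sgn_mul_self, one_smul, Finset.smul_sum]
    have hterm3 : ∀ j ∈ I, sgn m i I • sgn m j (insert i I) •
          (X j * pderiv i (P (insert i (I.erase j))))
        = -((sgn m j I * sgn m i (I.erase j)) •
            (X j * pderiv i (P (insert i (I.erase j))))) := by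
      intro j hj
      have hji : j ≠ i := fun h => hi' (h ▸ hj)
      rw [smul_smul, sgn_swap i j I hji.symm hi' hj, neg_smul]
    rw [Finset.sum_congr rfl hterm3, Finset.sum_neg_distrib, ← sub_eq_add_neg]
  have step : -∑ i ∈ Iᶜ, sgn m i I • pderiv i (xOp m P (insert i I))
      = ∑ i ∈ Iᶜ, ((P I + X i * pderiv i (P I))
          - ∑ j ∈ I, (sgn m j I * sgn m i (I.erase j)) •
              (X j * pderiv i (P (insert i (I.erase j))))) := by
    rw [← Finset.sum_neg_distrib]
    exact Finset.sum_congr rfl termA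
  rw [step, Finset.sum_sub_distrib, Finset.sum_add_distrib, Finset.sum_const, Finset.sum_comm]
  have cross : ∀ j ∈ I, ∑ i ∈ Iᶜ, (sgn m j I * sgn m i (I.erase j)) •
        (X j * pderiv i (P (insert i (I.erase j))))
      = -(X j * pderiv j (P I)) := by
    intro j hj
    have hS : ∑ i ∈ Iᶜ, sgn m i (I.erase j) • pderiv i (P (insert i (I.erase j)))
        = -(sgn m j I • pderiv j (P I)) := by
      have h0 := congrFun hds (I.erase j)
      rw [dStarOp_apply, Finset.compl_erase,
        Finset.sum_insert (Finset.notMem_compl.mpr hj), sgn_erase_self,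
        Finset.insert_erase hj] at h0
      exact eq_neg_of_add_eq_zero_right (neg_eq_zero.mp h0)
    calc ∑ i ∈ Iᶜ, (sgn m j I * sgn m i (I.erase j)) •
          (X j * pderiv i (P (insert i (I.erase j))))
        = sgn m j I • (X j *
            ∑ i ∈ Iᶜ, sgn m i (I.erase j) • pderiv i (P (insert i (I.erase j)))) := by
          rw [Finset.mul_sum, Finset.smul_sum]
          refine Finset.sum_congr rfl fun i _ => ?_
          rw [mul_smul, mul_smul_comm]
      _ = -(X j * pderiv j (P I)) := by
          rw [hS, mul_neg, mul_smul_comm, smul_neg, smul_smul, sgn_mul_self, one_smul]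
  rw [Finset.sum_congr rfl cross, Finset.sum_neg_distrib, sub_neg_eq_add]
  rw [add_assoc, Finset.sum_compl_add_sum]
  rw [euler_identity (P I) (hh I), Finset.card_compl, Fintype.card_fin]
  rw [Nat.cast_add, add_smul, Nat.cast_smul_eq_nsmul]
  rw [Nat.cast_smul_eq_nsmul]

lemma key2 {m k : ℕ} (P : PForm m) (hh : IsHomForm m k P) (hd : dOp m P = 0)
    (I : Finset (Fin m)) :
    dOp m (xStarOp m P) I = ((I.card + k : ℕ) : ℝ) • P I := by
  rw [dOp_apply]
  have termA : ∀ i ∈ I, sgn m i I • pderiv i (xStarOp m P (I.erase i))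
      = (P I + X i * pderiv i (P I))
        - ∑ j ∈ Iᶜ, (sgn m j I * sgn m i (insert j I)) •
            (X j * pderiv i (P (insert j (I.erase i)))) := by
    intro i hi
    rw [xStarOp_apply, Finset.compl_erase, Finset.sum_insert (Finset.notMem_compl.mpr hi),
      sgn_erase_self, Finset.insert_erase hi]
    rw [map_add, map_sum, Derivation.map_smul, pderiv_mul, pderiv_X_self, one_mul]
    have hterm2 : ∀ j ∈ Iᶜ, pderiv i (sgn m j (I.erase i) • (X j * P (insert j (I.erase i))))
        = sgn m j (I.erase i) • (X j * pderiv i (P (insert j (I.erase i)))) := by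
      intro j hj
      have hji : j ≠ i := fun h => (Finset.mem_compl.mp hj) (h ▸ hi)
      rw [Derivation.map_smul, pderiv_mul, pderiv_X_of_ne hji, zero_mul, zero_add]
    rw [Finset.sum_congr rfl hterm2]
    rw [smul_add, smul_smul, sgn_mul_self, one_smul, Finset.smul_sum]
    have hterm3 : ∀ j ∈ Iᶜ, sgn m i I • sgn m j (I.erase i) •
          (X j * pderiv i (P (insert j (I.erase i))))
        = -((sgn m j I * sgn m i (insert j I)) •
            (X j * pderiv i (P (insert j (I.erase i))))) := by
      intro j hj
      have hj' : j ∉ I := Finset.mem_compl.mp hj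
      have hji : j ≠ i := fun h => hj' (h ▸ hi)
      rw [smul_smul, ← neg_smul]
      congr 1
      have := sgn_swap j i I hji hj' hi
      linarith [this]
    rw [Finset.sum_congr rfl hterm3, Finset.sum_neg_distrib, ← sub_eq_add_neg]
  rw [Finset.sum_congr rfl termA, Finset.sum_sub_distrib, Finset.sum_add_distrib,
    Finset.sum_const, Finset.sum_comm]
  have cross : ∀ j ∈ Iᶜ, ∑ i ∈ I, (sgn m j I * sgn m i (insert j I)) •
        (X j * pderiv i (P (insert j (I.erase i))))
      = -(X j * pderiv j (P I)) := by
    intro j hj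
    have hj' : j ∉ I := Finset.mem_compl.mp hj
    have hS : ∑ i ∈ I, sgn m i (insert j I) • pderiv i (P ((insert j I).erase i))
        = -(sgn m j I • pderiv j (P I)) := by
      have h0 := congrFun hd (insert j I)
      rw [dOp_apply, Finset.sum_insert hj', sgn_insert_self, Finset.erase_insert hj'] at h0
      exact eq_neg_of_add_eq_zero_right h0
    calc ∑ i ∈ I, (sgn m j I * sgn m i (insert j I)) •
          (X j * pderiv i (P (insert j (I.erase i))))
        = sgn m j I • (X j *
            ∑ i ∈ I, sgn m i (insert j I) • pderiv i (P ((insert j I).erase i))) := by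
          rw [Finset.mul_sum, Finset.smul_sum]
          refine Finset.sum_congr rfl fun i hi => ?_
          have hji : j ≠ i := fun h => hj' (by rw [h]; exact hi)
          rw [Finset.erase_insert_of_ne hji,
            mul_smul, mul_smul_comm]
      _ = -(X j * pderiv j (P I)) := by
          rw [hS, mul_neg, mul_smul_comm, smul_neg, smul_smul, sgn_mul_self, one_smul]
  rw [Finset.sum_congr rfl cross, Finset.sum_neg_distrib, sub_neg_eq_add]
  rw [add_assoc, Finset.sum_add_sum_compl]
  rw [euler_identity (P I) (hh I)]
  rw [Nat.cast_add, add_smul, Nat.cast_smul_eq_nsmul, Nat.cast_smul_eq_nsmul]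

/-- `d*(xP₂) = (k+m-s)P₂` for `P₂ ∈ H^{s-1}_{k-1}` and
`d(x*P₃) = (k+s)P₃` for `P₃ ∈ H^{s+1}_{k-1}`. -/
theorem dStar_x_and_d_xStar (m s k : ℕ) (hk : 1 ≤ k) :
    (∀ P₂ : PForm m, 1 ≤ s → s ≤ m → P₂ ∈ Hset m (s - 1) (k - 1) →
      dStarOp m (xOp m P₂) = ((k : ℝ) + m - s) • P₂) ∧
    (∀ P₃ : PForm m, s ≤ m - 1 → P₃ ∈ Hset m (s + 1) (k - 1) →
      dOp m (xStarOp m P₃) = ((k : ℝ) + s) • P₃) := by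
  constructor
  · rintro P₂ hs1 hsm ⟨hP2s, hP2h, -, hP2ds⟩
    funext I
    rw [show (((k : ℝ) + m - s) • P₂) I = ((k : ℝ) + m - s) • P₂ I from rfl]
    rw [key1 P₂ hP2h hP2ds I]
    by_cases hc : I.card = s - 1
    · congr 1
      rw [hc]
      have h1 : m - (s - 1) + (k - 1) = k + m - s := by omega
      rw [h1, Nat.cast_sub (by omega : s ≤ k + m), Nat.cast_add]
    · rw [hP2s I hc, smul_zero, smul_zero]
  · rintro P₃ hsm ⟨hP3s, hP3h, hP3d, -⟩
    funext I
    rw [show (((k : ℝ) + s) • P₃) I = ((k : ℝ) + s) • P₃ I from rfl]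
    rw [key2 P₃ hP3h hP3d I]
    by_cases hc : I.card = s + 1
    · congr 1
      rw [hc, show s + 1 + (k - 1) = k + s from by omega, Nat.cast_add]
    · rw [hP3s I hc, smul_zero, smul_zero]
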